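/- arXiv:2003.07382 — 3 statements merged into one kernel-verified Lean document; each statement's English description precedes it below -/
import Mathlib

section
/- Let F be a spanning forest of the non-incidence graph of a polytope P and let p be a (d+2)-minor of the symbolic slack matrix S_P(x). Then the rehomogenization H(p^F) of the dehomogenization p^F (obtained by setting to 1 all variables indexed by edges of F) equals p divided by the product of all variables of F that divide every monomial of p. -/
/-!
Every monomial of a minor is the 0/1 pattern of a permutation, so the minor is multihomogeneous
and squarefree. Dehomogenization erases the forest coordinates of exponents. If two
multihomogeneous polynomials have the same dehomogenization, two matched exponent pairs differ
by weights on the forest edges whose difference has vanishing row and column sums, and such a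
weight on an acyclic graph is zero (a leaf of its support would carry a nonzero line sum). So
all matched pairs differ by one fixed vector, which must vanish when neither polynomial is
divisible by a forest variable: the rehomogenization is unique. Dividing the minor by the forest
variables that divide it produces such a polynomial, squarefreeness ruling out a second factor
of a forest variable.
-/

open MvPolynomial Sum
open Classical

namespace SimpleGraph

variable {V : Type*} {G : SimpleGraph V}

theorem IsAcyclic.exists_existsUnique_adj [Finite V] (hG : G.IsAcyclic) {a b : V}
    (hab : G.Adj a b) : ∃ v, ∃! u, G.Adj v u := by
  have : Nonempty V := ⟨a⟩
  obtain ⟨u, v, p, hp, hmax⟩ := Walk.exists_isPath_forall_isPath_length_le_length G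
  have hnil : ¬ p.Nil := by
    rw [← Walk.length_eq_zero_iff]
    have := hmax a b _ (Path.singleton hab).2
    simp at this
    omega
  refine ⟨u, p.snd, p.adj_snd hnil, fun w hadj => hG.eq_snd_of_adj_start hp hadj ?_⟩
  by_contra hw
  have := hmax _ _ _ (hp.cons hw (h := hadj.symm))
  simp at this

theorem IsAcyclic.eq_zero_of_sum_eq_zero [Fintype V] {M : Type*} [AddCommMonoid M]
    (hG : G.IsAcyclic) (w : V → V → M) (hsymm : ∀ u v, w u v = w v u)
    (hadj : ∀ u v, w u v ≠ 0 → G.Adj u v) (hsum : ∀ u, ∑ v, w u v = 0) (u v : V) :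
    w u v = 0 := by
  by_contra huv
  let H : SimpleGraph V :=
    { Adj u v := w u v ≠ 0
      symm := ⟨fun u v h => by rwa [hsymm]⟩
      loopless := ⟨fun u h => G.irrefl (hadj u u h)⟩ }
  obtain ⟨x, y, hxy, hy⟩ := (hG.anti (G := H) hadj).exists_existsUnique_adj (a := u) (b := v) huv
  have hleaf : ∑ z, w x z = w x y :=
    Finset.sum_eq_single y (fun z _ hz => not_not.mp fun h => hz (hy z h)) (by simp)
  exact hxy (hleaf ▸ hsum x)

theorem IsAcyclic.eq_zero_of_line_sums_eq_zero {ι κ : Type*} [Fintype ι] [Fintype κ]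
    {M : Type*} [AddCommMonoid M] {G : SimpleGraph (ι ⊕ κ)} (hG : G.IsAcyclic)
    (t : ι × κ → M) (hadj : ∀ e, t e ≠ 0 → G.Adj (inl e.1) (inr e.2))
    (hrow : ∀ i, ∑ j, t (i, j) = 0) (hcol : ∀ j, ∑ i, t (i, j) = 0) (e : ι × κ) : t e = 0 := by
  let w : ι ⊕ κ → ι ⊕ κ → M
    | inl i, inr j => t (i, j)
    | inr j, inl i => t (i, j)
    | _, _ => 0
  refine hG.eq_zero_of_sum_eq_zero w ?_ ?_ ?_ (inl e.1) (inr e.2)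
  · rintro (i | j) (i' | j') <;> rfl
  · rintro (i | j) (i' | j') h
    exacts [absurd rfl h, hadj _ h, (hadj _ h).symm, absurd rfl h]
  · rintro (i | j) <;> simp [w, Fintype.sum_sum_type, hrow, hcol]

end SimpleGraph

namespace MvPolynomial

variable {σ R : Type*} [CommSemiring R]

theorem monomial_one_dvd_iff {d : σ →₀ ℕ} {x : MvPolynomial σ R} :
    monomial d (1 : R) ∣ x ↔ ∀ m ∈ x.support, d ≤ m := by
  rw [monomial_one_dvd_iff_modMonomial_eq_zero, MvPolynomial.ext_iff]
  refine forall_congr' fun m => ?_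
  by_cases h : d ≤ m
  · simp [h, coeff_modMonomial_of_le]
  · simp [h, coeff_modMonomial_of_not_le]

theorem X_dvd_iff {i : σ} {x : MvPolynomial σ R} :
    X i ∣ x ↔ ∀ m ∈ x.support, m i ≠ 0 := by
  simp only [X, monomial_one_dvd_iff, Finsupp.single_le_iff, Nat.one_le_iff_ne_zero]

end MvPolynomial

namespace Rehomogenization

noncomputable section

variable {ι κ R : Type*} [CommSemiring R] (F : SimpleGraph (ι ⊕ κ))

def eraseForest (m : ι × κ →₀ ℕ) : ι × κ →₀ ℕ :=
  m.filter fun e => ¬ F.Adj (inl e.1) (inr e.2)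

def dehomogenize : MvPolynomial (ι × κ) R →ₐ[R] MvPolynomial (ι × κ) R :=
  aeval fun e => if F.Adj (inl e.1) (inr e.2) then 1 else X e

def IsForestContentFree (q : MvPolynomial (ι × κ) R) : Prop :=
  ∀ e : ι × κ, F.Adj (inl e.1) (inr e.2) → ¬ X e ∣ q

variable {F}

theorem eraseForest_apply_of_not_adj {m : ι × κ →₀ ℕ} {e : ι × κ}
    (he : ¬ F.Adj (inl e.1) (inr e.2)) : eraseForest F m e = m e :=
  Finsupp.filter_apply_pos _ _ he

theorem eraseForest_add (m m' : ι × κ →₀ ℕ) :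
    eraseForest F (m + m') = eraseForest F m + eraseForest F m' :=
  Finsupp.filter_add

theorem dehomogenize_monomial (m : ι × κ →₀ ℕ) (c : R) :
    dehomogenize F (monomial m c) = monomial (eraseForest F m) c := by
  rw [dehomogenize, aeval_monomial, monomial_eq, algebraMap_eq, Finsupp.prod, Finsupp.prod,
    eraseForest, Finsupp.support_filter, Finset.prod_filter]
  congr 1
  refine Finset.prod_congr rfl fun e _ => ?_
  by_cases h : F.Adj (inl e.1) (inr e.2) <;> simp [h]

theorem coeff_dehomogenize (r : MvPolynomial (ι × κ) R) (n : ι × κ →₀ ℕ) :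
    coeff n (dehomogenize F r) = ∑ m ∈ r.support with eraseForest F m = n, coeff m r := by
  conv_lhs => rw [r.as_sum]
  simp only [map_sum, dehomogenize_monomial, coeff_sum, coeff_monomial, Finset.sum_filter]

variable [Fintype ι] [Fintype κ]

def lineSums : (ι × κ →₀ ℕ) →+ (ι → ℕ) × (κ → ℕ) where
  toFun m := (fun i => ∑ j, m (i, j), fun j => ∑ i, m (i, j))
  map_zero' := by ext <;> simp
  map_add' m m' := by ext <;> simp [Finset.sum_add_distrib]

def IsMultihomogeneous (q : MvPolynomial (ι × κ) R) : Prop :=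
  ∀ m ∈ q.support, ∀ m' ∈ q.support, lineSums m = lineSums m'

variable (F) in
def forestContent (p : MvPolynomial (ι × κ) R) : Finset (ι × κ) :=
  Finset.univ.filter fun e => F.Adj (inl e.1) (inr e.2) ∧ X e ∣ p

theorem isMultihomogeneous_iff {q : MvPolynomial (ι × κ) R} :
    IsMultihomogeneous q ↔ ∀ m ∈ q.support, ∀ m' ∈ q.support,
      (∀ i, ∑ j, m (i, j) = ∑ j, m' (i, j)) ∧ (∀ j, ∑ i, m (i, j) = ∑ i, m' (i, j)) := by
  simp [IsMultihomogeneous, lineSums, Prod.ext_iff, funext_iff]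

theorem IsMultihomogeneous.of_monomial_mul {d : ι × κ →₀ ℕ} {q : MvPolynomial (ι × κ) R}
    (h : IsMultihomogeneous (monomial d 1 * q)) : IsMultihomogeneous q := by
  intro m hm m' hm'
  have hshift : ∀ n ∈ q.support, d + n ∈ (monomial d (1 : R) * q).support := fun n hn => by
    rwa [mem_support_iff, coeff_monomial_mul, one_mul, ← mem_support_iff]
  simpa using h _ (hshift m hm) _ (hshift m' hm')

theorem eq_of_eraseForest_eq (hF : F.IsAcyclic) {m m' : ι × κ →₀ ℕ}
    (he : eraseForest F m = eraseForest F m') (hs : lineSums m = lineSums m') : m = m' := by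
  have hoff e (h : ¬ F.Adj (inl e.1) (inr e.2)) : m e = m' e := by
    simpa [eraseForest_apply_of_not_adj h] using DFunLike.congr_fun he e
  have hrow i : ∑ j, m (i, j) = ∑ j, m' (i, j) := congrFun (congrArg Prod.fst hs) i
  have hcol j : ∑ i, m (i, j) = ∑ i, m' (i, j) := congrFun (congrArg Prod.snd hs) j
  ext e
  have := hF.eq_zero_of_line_sums_eq_zero (fun e => (m e : ℤ) - m' e)
    (fun e hne => not_not.mp fun h => hne (by simp [hoff e h]))
    (fun i => by simp [Finset.sum_sub_distrib, ← Nat.cast_sum, hrow])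
    (fun j => by simp [Finset.sum_sub_distrib, ← Nat.cast_sum, hcol]) e
  omega

theorem coeff_dehomogenize_eraseForest (hF : F.IsAcyclic) {r : MvPolynomial (ι × κ) R}
    (hr : IsMultihomogeneous r) {m : ι × κ →₀ ℕ} (hm : m ∈ r.support) :
    coeff (eraseForest F m) (dehomogenize F r) = coeff m r := by
  rw [coeff_dehomogenize, Finset.sum_eq_single_of_mem m (by simp [hm])]
  intro m' hm' hne
  rw [Finset.mem_filter] at hm'
  exact absurd (eq_of_eraseForest_eq hF hm'.2 (hr _ hm'.1 _ hm)) hne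

theorem exists_mem_support_eraseForest_eq (hF : F.IsAcyclic) {r s : MvPolynomial (ι × κ) R}
    (hr : IsMultihomogeneous r) (hrs : dehomogenize F r = dehomogenize F s)
    {m : ι × κ →₀ ℕ} (hm : m ∈ r.support) :
    ∃ m' ∈ s.support, eraseForest F m' = eraseForest F m := by
  have h : coeff (eraseForest F m) (dehomogenize F s) ≠ 0 := by
    rw [← hrs, coeff_dehomogenize_eraseForest hF hr hm]
    exact mem_support_iff.mp hm
  rw [coeff_dehomogenize] at h
  obtain ⟨m', hm', -⟩ := Finset.exists_ne_zero_of_sum_ne_zero h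
  exact ⟨m', Finset.mem_filter.mp hm'⟩

theorem le_of_eraseForest_eq (hF : F.IsAcyclic) {r s : MvPolynomial (ι × κ) R}
    (hr : IsMultihomogeneous r) (hs : IsMultihomogeneous s)
    (hrs : dehomogenize F r = dehomogenize F s) (hcf : IsForestContentFree F r)
    {m m' : ι × κ →₀ ℕ} (hm : m ∈ r.support) (hm' : m' ∈ s.support)
    (he : eraseForest F m = eraseForest F m') : m ≤ m' := by
  intro e
  by_contra! hlt
  have hadj : F.Adj (inl e.1) (inr e.2) := not_not.mp fun h => hlt.ne' <| by
    simpa [eraseForest_apply_of_not_adj h] using DFunLike.congr_fun he e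
  refine hcf e hadj (X_dvd_iff.mpr fun n hn => ?_)
  obtain ⟨n', hn', hen⟩ := exists_mem_support_eraseForest_eq hF hr hrs hn
  -- all matched pairs of exponents differ by the same vector, namely `m - m'`
  have hshift : m + n' = n + m' := eq_of_eraseForest_eq hF
    (by rw [eraseForest_add, eraseForest_add, he, hen, add_comm])
    (by rw [map_add, map_add, hr m hm n hn, hs n' hn' m' hm'])
  have := DFunLike.congr_fun hshift e
  simp only [Finsupp.add_apply] at this
  omega

theorem coeff_eq_of_mem_support (hF : F.IsAcyclic) {r s : MvPolynomial (ι × κ) R}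
    (hr : IsMultihomogeneous r) (hs : IsMultihomogeneous s)
    (hr' : r ≠ 0 → IsForestContentFree F r) (hs' : s ≠ 0 → IsForestContentFree F s)
    (hrs : dehomogenize F r = dehomogenize F s) {m : ι × κ →₀ ℕ} (hm : m ∈ r.support) :
    coeff m r = coeff m s := by
  obtain ⟨m', hm', he⟩ := exists_mem_support_eraseForest_eq hF hr hrs hm
  have hm'm : m' = m := le_antisymm
    (le_of_eraseForest_eq hF hs hr hrs.symm (hs' (support_nonempty.mp ⟨_, hm'⟩)) hm' hm he)
    (le_of_eraseForest_eq hF hr hs hrs (hr' (support_nonempty.mp ⟨_, hm⟩)) hm hm' he.symm)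
  rw [← coeff_dehomogenize_eraseForest hF hr hm, hrs, ← hm'm,
    coeff_dehomogenize_eraseForest hF hs hm']

theorem eq_of_dehomogenize_eq (hF : F.IsAcyclic) {r s : MvPolynomial (ι × κ) R}
    (hr : IsMultihomogeneous r) (hs : IsMultihomogeneous s)
    (hr' : r ≠ 0 → IsForestContentFree F r) (hs' : s ≠ 0 → IsForestContentFree F s)
    (hrs : dehomogenize F r = dehomogenize F s) : r = s := by
  ext m
  by_cases hm : m ∈ r.support
  · exact coeff_eq_of_mem_support hF hr hs hr' hs' hrs hm
  by_cases hm' : m ∈ s.support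
  · exact (coeff_eq_of_mem_support hF hs hr hs' hr' hrs.symm hm').symm
  rw [notMem_support_iff.mp hm, notMem_support_iff.mp hm']

theorem exists_rehomogenization {p : MvPolynomial (ι × κ) R} (hp : IsMultihomogeneous p)
    (hle : ∀ m ∈ p.support, ∀ e, m e ≤ 1) :
    ∃ q, p = (∏ e ∈ forestContent F p, X e) * q ∧ dehomogenize F q = dehomogenize F p ∧
      IsMultihomogeneous q ∧ (q ≠ 0 → IsForestContentFree F q) := by
  set D := forestContent F p
  set d : ι × κ →₀ ℕ := ∑ e ∈ D, Finsupp.single e 1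
  have hmem e : e ∈ D ↔ F.Adj (inl e.1) (inr e.2) ∧ X e ∣ p := by simp [D, forestContent]
  have hd e : d e = if e ∈ D then 1 else 0 := by
    simp [d, Finsupp.finsetSum_apply, Finsupp.single_apply]
  obtain ⟨q, hq⟩ : monomial d (1 : R) ∣ p := monomial_one_dvd_iff.mpr fun m hm e => by
    rw [hd]
    split_ifs with h
    exacts [Nat.one_le_iff_ne_zero.mpr (X_dvd_iff.mp ((hmem e).mp h).2 m hm), Nat.zero_le _]
  have hprod : ∏ e ∈ D, (X e : MvPolynomial (ι × κ) R) = monomial d 1 :=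
    (monomial_sum_one D _).symm
  rw [hprod]
  refine ⟨q, hq, ?_, (hq ▸ hp).of_monomial_mul, fun hq0 e hadj hdvd => ?_⟩
  · have hd0 : eraseForest F d = 0 := by
      ext e
      by_cases h : F.Adj (inl e.1) (inr e.2)
      · exact Finsupp.filter_apply_neg _ _ (not_not.mpr h)
      · rw [eraseForest_apply_of_not_adj h, hd, if_neg fun he => h ((hmem e).mp he).1]
        rfl
    rw [hq, map_mul, dehomogenize_monomial, hd0, monomial_zero', C_1, one_mul]
  · obtain ⟨m, hm⟩ := support_nonempty.mpr hq0
    have heD : e ∈ D := (hmem e).mpr ⟨hadj, hq ▸ dvd_mul_of_dvd_right hdvd _⟩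
    have hdm : d + m ∈ p.support := by
      rwa [hq, mem_support_iff, coeff_monomial_mul, one_mul, ← mem_support_iff]
    have h1 := hle _ hdm e
    have h2 := X_dvd_iff.mp hdvd m hm
    simp only [Finsupp.add_apply, hd, if_pos heD] at h1
    omega

end

section Determinant

variable {ι : Type*} [Fintype ι]

noncomputable def permExponent (σ : Equiv.Perm ι) : ι × ι →₀ ℕ :=
  ∑ i, Finsupp.single (σ i, i) 1

theorem permExponent_apply (σ : Equiv.Perm ι) (a b : ι) :
    permExponent σ (a, b) = if σ b = a then 1 else 0 := by
  rw [permExponent, Finsupp.finsetSum_apply, Finset.sum_eq_single b] <;>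
    simp +contextual [Finsupp.single_apply, Prod.ext_iff]

theorem prod_X_eq_monomial_permExponent {R : Type*} [CommSemiring R] (σ : Equiv.Perm ι) :
    ∏ i, (X (σ i, i) : MvPolynomial (ι × ι) R) = monomial (permExponent σ) 1 :=
  (monomial_sum_one _ _).symm

theorem lineSums_permExponent (σ : Equiv.Perm ι) : lineSums (permExponent σ) = (1, 1) := by
  ext a
  · simp [lineSums, permExponent_apply, ← σ.eq_symm_apply]
  · simp [lineSums, permExponent_apply]

variable {R : Type*} [CommRing R] [DecidableEq ι]

theorem exists_eq_permExponent_of_mem_support_det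
    {M : Matrix ι ι (MvPolynomial (ι × ι) R)} (hM : ∀ i j, M i j = 0 ∨ M i j = X (i, j))
    {m : ι × ι →₀ ℕ} (hm : m ∈ M.det.support) : ∃ σ : Equiv.Perm ι, m = permExponent σ := by
  rw [Matrix.det_apply] at hm
  obtain ⟨σ, -, hσ⟩ := Finset.mem_biUnion.mp (support_sum hm)
  replace hσ := support_smul hσ
  by_cases hall : ∀ i, M (σ i) i = X (σ i, i)
  · rw [Finset.prod_congr rfl fun i _ => hall i, prod_X_eq_monomial_permExponent] at hσ
    exact ⟨σ, Finset.mem_singleton.mp (support_monomial_subset hσ)⟩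
  · obtain ⟨i, hi⟩ := not_forall.mp hall
    have h0 : ∏ i, M (σ i) i = 0 :=
      Finset.prod_eq_zero (Finset.mem_univ i) ((hM _ _).resolve_right hi)
    simp [h0] at hσ

theorem isMultihomogeneous_det {M : Matrix ι ι (MvPolynomial (ι × ι) R)}
    (hM : ∀ i j, M i j = 0 ∨ M i j = X (i, j)) : IsMultihomogeneous M.det := by
  intro m hm m' hm'
  obtain ⟨σ, rfl⟩ := exists_eq_permExponent_of_mem_support_det hM hm
  obtain ⟨τ, rfl⟩ := exists_eq_permExponent_of_mem_support_det hM hm'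
  rw [lineSums_permExponent, lineSums_permExponent]

theorem le_one_of_mem_support_det {M : Matrix ι ι (MvPolynomial (ι × ι) R)}
    (hM : ∀ i j, M i j = 0 ∨ M i j = X (i, j)) {m : ι × ι →₀ ℕ} (hm : m ∈ M.det.support)
    (e : ι × ι) : m e ≤ 1 := by
  obtain ⟨σ, rfl⟩ := exists_eq_permExponent_of_mem_support_det hM hm
  rw [permExponent_apply]
  split_ifs <;> omega

end Determinant

end Rehomogenization

open Rehomogenization in
theorem rehomogenized_minor_eq_minor_div_forest_content_general (k : ℕ)
    (M : Matrix (Fin k) (Fin k) (MvPolynomial (Fin k × Fin k) ℝ))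
    (hM : ∀ i j, M i j = 0 ∨ M i j = X (i, j))
    (F : SimpleGraph (Fin k ⊕ Fin k)) (hacyclic : F.IsAcyclic)
    (p : MvPolynomial (Fin k × Fin k) ℝ) (hp : p = M.det)
    (deh : MvPolynomial (Fin k × Fin k) ℝ →ₐ[ℝ] MvPolynomial (Fin k × Fin k) ℝ)
    (hdeh : deh = aeval fun e : Fin k × Fin k =>
      if F.Adj (inl e.1) (inr e.2) then 1 else X e)
    (D : Finset (Fin k × Fin k))
    (hD : D = Finset.univ.filter fun e : Fin k × Fin k =>
      F.Adj (inl e.1) (inr e.2) ∧ X e ∣ p)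
    (multihom : MvPolynomial (Fin k × Fin k) ℝ → Prop)
    (hmultihom : ∀ q, multihom q ↔ ∀ m ∈ q.support, ∀ m' ∈ q.support,
      (∀ i : Fin k, ∑ j : Fin k, m (i, j) = ∑ j : Fin k, m' (i, j)) ∧
      (∀ j : Fin k, ∑ i : Fin k, m (i, j) = ∑ i : Fin k, m' (i, j)))
    (contentFree : MvPolynomial (Fin k × Fin k) ℝ → Prop)
    (hcontentFree : ∀ q, contentFree q ↔
      ∀ e : Fin k × Fin k, F.Adj (inl e.1) (inr e.2) → ¬ (X e ∣ q)) :
    (∃ q, p = (∏ e ∈ D, X e) * q ∧ deh q = deh p ∧ multihom q ∧ (q ≠ 0 → contentFree q)) ∧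
    (∀ q, deh q = deh p → multihom q → (q ≠ 0 → contentFree q) →
      p = (∏ e ∈ D, X e) * q) := by
  have hmultihom' q : multihom q ↔ IsMultihomogeneous q :=
    (hmultihom q).trans isMultihomogeneous_iff.symm
  subst hdeh hD
  obtain ⟨q₀, hpq₀, hdeh₀, hq₀, hcf₀⟩ := exists_rehomogenization (F := F)
    (hp ▸ isMultihomogeneous_det hM) (hp ▸ fun _ => le_one_of_mem_support_det hM)
  refine ⟨⟨q₀, hpq₀, hdeh₀, (hmultihom' q₀).mpr hq₀, fun h => (hcontentFree q₀).mpr (hcf₀ h)⟩,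
    fun q hdeh hq hcf => ?_⟩
  rwa [eq_of_dehomogenize_eq hacyclic ((hmultihom' q).mp hq) hq₀
    (fun h => (hcontentFree q).mp (hcf h)) hcf₀ (hdeh.trans hdeh₀.symm)]

/-- Lemma (minor rehomogenization).  Let p be a minor of a symbolic slack matrix (a square
matrix M whose entries are 0 or distinct variables X (i,j)), and let F be a spanning forest
of the bipartite non-incidence graph (nodes are rows and columns, edges the variable
entries).  The dehomogenization p^F sets the variables of F to 1; the rehomogenization
H(p^F) is the unique polynomial which is homogeneous with respect to each row and column
grading, has no forest variable dividing it, and dehomogenizes to p^F.  Then H(p^F) equals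
p divided by the product of all variables of F that divide p. -/
theorem rehomogenized_minor_eq_minor_div_forest_content (k : ℕ)
    (M : Matrix (Fin k) (Fin k) (MvPolynomial (Fin k × Fin k) ℝ))
    (hM : ∀ i j, M i j = 0 ∨ M i j = X (i, j))
    (F : SimpleGraph (Fin k ⊕ Fin k)) (hacyclic : F.IsAcyclic)
    (hFedges : ∀ u w, F.Adj u w →
      (∃ i j, u = inl i ∧ w = inr j ∧ M i j = X (i, j)) ∨
      (∃ i j, u = inr j ∧ w = inl i ∧ M i j = X (i, j)))
    (p : MvPolynomial (Fin k × Fin k) ℝ) (hp : p = M.det)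
    (deh : MvPolynomial (Fin k × Fin k) ℝ →ₐ[ℝ] MvPolynomial (Fin k × Fin k) ℝ)
    (hdeh : deh = aeval fun e : Fin k × Fin k =>
      if F.Adj (inl e.1) (inr e.2) then 1 else X e)
    (D : Finset (Fin k × Fin k))
    (hD : D = Finset.univ.filter fun e : Fin k × Fin k =>
      F.Adj (inl e.1) (inr e.2) ∧ X e ∣ p)
    (multihom : MvPolynomial (Fin k × Fin k) ℝ → Prop)
    (hmultihom : ∀ q, multihom q ↔ ∀ m ∈ q.support, ∀ m' ∈ q.support,
      (∀ i : Fin k, ∑ j : Fin k, m (i, j) = ∑ j : Fin k, m' (i, j)) ∧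
      (∀ j : Fin k, ∑ i : Fin k, m (i, j) = ∑ i : Fin k, m' (i, j)))
    (contentFree : MvPolynomial (Fin k × Fin k) ℝ → Prop)
    (hcontentFree : ∀ q, contentFree q ↔
      ∀ e : Fin k × Fin k, F.Adj (inl e.1) (inr e.2) → ¬ (X e ∣ q)) :
    (∃ q, p = (∏ e ∈ D, X e) * q ∧ deh q = deh p ∧ multihom q ∧ (q ≠ 0 → contentFree q)) ∧
    (∀ q, deh q = deh p → multihom q → (q ≠ 0 → contentFree q) →
      p = (∏ e ∈ D, X e) * q) :=
  rehomogenized_minor_eq_minor_div_forest_content_general k M hM F hacyclic p hp deh hdeh D hD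
    multihom hmultihom contentFree hcontentFree
end

section
/- For positive reals satisfying the twelve linear relations x_{33} = x_{35} + 1 (and the other generators of the scaled Perles reduced slack ideal: x_{24}=x_{35}, x_{23}=x_{35}, x_{22}=1, x_{19}=x_{35}, x_{18}=x_{35}, x_{13}=x_{35}+1, x_{11}=x_{35}, x_{10}=1, x_2=1, x_1=x_{35}+1) together with x_{35}^2 + x_{35} − 1 = 0, every solution with x_{35} > 0 has x_{35} = (√5 − 1)/2; hence all coordinates of any positive real solution are irrational or equal to 1. -/
/-! The shift `y = x₃₅ + 1` turns `x₃₅² + x₃₅ - 1 = 0` into `y² = y + 1`, whose only positive root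
is the golden ratio `φ = (1 + √5)/2`. So every coordinate is `φ`, `φ - 1` or `1`. -/

open Real goldenRatio

theorem Real.eq_goldenRatio_of_sq_eq_add_one {y : ℝ} (hy : 0 < y) (h : y ^ 2 = y + 1) : y = φ := by
  have hroots : (y - φ) * (y - ψ) = 0 := by
    linear_combination h - y * goldenRatio_add_goldenConj + goldenRatio_mul_goldenConj
  rcases mul_eq_zero.mp hroots with hφ | hψ
  · exact sub_eq_zero.mp hφ
  · linarith [sub_eq_zero.mp hψ, goldenConj_neg]

theorem perles_positive_solution_irrational_general
    (x1 x2 x10 x11 x13 x18 x19 x22 x23 x24 x33 x35 : ℝ)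
    (h35 : 0 < x35)
    (e0 : x35 ^ 2 + x35 - 1 = 0)
    (e1 : x33 = x35 + 1) (e2 : x24 = x35) (e3 : x23 = x35) (e4 : x22 = 1)
    (e5 : x19 = x35) (e6 : x18 = x35) (e7 : x13 = x35 + 1) (e8 : x11 = x35)
    (e9 : x10 = 1) (e10 : x2 = 1) (e11 : x1 = x35 + 1) :
    x35 = (Real.sqrt 5 - 1) / 2 ∧
    Irrational x35 ∧ Irrational x1 ∧ Irrational x11 ∧ Irrational x13 ∧
    Irrational x18 ∧ Irrational x19 ∧ Irrational x23 ∧ Irrational x24 ∧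
    Irrational x33 ∧ x2 = 1 ∧ x10 = 1 ∧ x22 = 1 := by
  have hφ : x35 + 1 = φ :=
    eq_goldenRatio_of_sq_eq_add_one (by positivity) (by linear_combination e0)
  have hirr' : Irrational (x35 + 1) := hφ ▸ goldenRatio_irrational
  have hirr : Irrational x35 := .of_add_natCast 1 (by rwa [Nat.cast_one])
  subst e1 e2 e3 e4 e5 e6 e7 e8 e9 e10 e11
  exact ⟨by linear_combination hφ, hirr, hirr', hirr, hirr', hirr, hirr, hirr, hirr, hirr', rfl, rfl,
    rfl⟩

/-- In the scaled reduced slack ideal of the Perles polytope, every positive real solution of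
the generators x₃₅² + x₃₅ − 1 = 0, x₃₃ = x₃₅ + 1, x₂₄ = x₃₅, x₂₃ = x₃₅, x₂₂ = 1,
x₁₉ = x₃₅, x₁₈ = x₃₅, x₁₃ = x₃₅ + 1, x₁₁ = x₃₅, x₁₀ = 1, x₂ = 1, x₁ = x₃₅ + 1 has
x₃₅ = (√5 − 1)/2; hence all coordinates are irrational or equal to 1. -/
theorem perles_positive_solution_irrational
    (x1 x2 x10 x11 x13 x18 x19 x22 x23 x24 x33 x35 : ℝ)
    (h1 : 0 < x1) (h2 : 0 < x2) (h10 : 0 < x10) (h11 : 0 < x11) (h13 : 0 < x13)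
    (h18 : 0 < x18) (h19 : 0 < x19) (h22 : 0 < x22) (h23 : 0 < x23) (h24 : 0 < x24)
    (h33 : 0 < x33) (h35 : 0 < x35)
    (e0 : x35 ^ 2 + x35 - 1 = 0)
    (e1 : x33 = x35 + 1) (e2 : x24 = x35) (e3 : x23 = x35) (e4 : x22 = 1)
    (e5 : x19 = x35) (e6 : x18 = x35) (e7 : x13 = x35 + 1) (e8 : x11 = x35)
    (e9 : x10 = 1) (e10 : x2 = 1) (e11 : x1 = x35 + 1) :
    x35 = (Real.sqrt 5 - 1) / 2 ∧
    Irrational x35 ∧ Irrational x1 ∧ Irrational x11 ∧ Irrational x13 ∧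
    Irrational x18 ∧ Irrational x19 ∧ Irrational x23 ∧ Irrational x24 ∧
    Irrational x33 ∧ x2 = 1 ∧ x10 = 1 ∧ x22 = 1 :=
  perles_positive_solution_irrational_general x1 x2 x10 x11 x13 x18 x19 x22 x23 x24 x33 x35 h35 e0
    e1 e2 e3 e4 e5 e6 e7 e8 e9 e10 e11
end

section
/- Let S(x) be a symbolic slack matrix (a matrix over a polynomial ring whose entries are either 0 or distinct variables). If two monomials appearing in the Leibniz expansion of a k×k minor of S(x) become equal after setting the variables of a forest F of the non-incidence bipartite graph to 1, then the monomials were already equal. -/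
/-!
Under the substitution `X (i, j) ↦ 1` for the edges of `F`, a variable of `∏ i, X (i, σ i)` that
is not an edge of `F` survives and can be detected by evaluating at the point that is `0` on it and
`1` elsewhere. Hence equal images force `σ` and `τ` to agree off `F`: the perfect matchings
`{(i, σ i)}` and `{(i, τ i)}` of the bipartite row/column graph differ only inside the forest `F`.
Their symmetric difference is a disjoint union of cycles, none of whose edges is a bridge, while
every edge of a forest is; so it is empty and `σ = τ`.
-/

open MvPolynomial Sum
open Classical

open scoped symmDiff

namespace MvPolynomial

variable {R σ ι κ : Type*} [CommSemiring R] [Fintype ι]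

noncomputable def dehomogenize (p : σ → Prop) [DecidablePred p] :
    MvPolynomial σ R →ₐ[R] MvPolynomial σ R :=
  aeval fun x => if p x then 1 else X x

section

variable {p : σ → Prop} [DecidablePred p]

theorem dehomogenize_X (x : σ) :
    dehomogenize (R := R) p (X x) = if p x then 1 else X x :=
  aeval_X _ x

theorem eval_update_dehomogenize_prod_X_eq_zero_iff [NoZeroDivisors R] [Nontrivial R] {e : σ}
    (he : ¬ p e) (u : ι → σ) :
    eval (Function.update 1 e 0) (dehomogenize (R := R) p (∏ j, X (u j))) = 0 ↔
      ∃ j, u j = e := by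
  simp only [map_prod, dehomogenize_X, Finset.prod_eq_zero_iff, Finset.mem_univ, true_and]
  refine exists_congr fun j => ?_
  by_cases hj : u j = e
  · simp [hj, he]
  · by_cases hpj : p (u j) <;> simp [hj, hpj]

theorem exists_eq_of_dehomogenize_prod_X_eq [NoZeroDivisors R] [Nontrivial R] {v w : ι → σ}
    (h : dehomogenize (R := R) p (∏ j, X (v j)) = dehomogenize p (∏ j, X (w j)))
    {i : ι} (hi : ¬ p (v i)) : ∃ j, w j = v i := by
  rw [← eval_update_dehomogenize_prod_X_eq_zero_iff (R := R) hi, ← h,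
    eval_update_dehomogenize_prod_X_eq_zero_iff hi]
  exact ⟨i, rfl⟩

end

theorem apply_eq_of_dehomogenize_prod_X_eq [NoZeroDivisors R] [Nontrivial R]
    {p : ι × κ → Prop} [DecidablePred p] {f g : ι → κ}
    (h : dehomogenize (R := R) p (∏ i, X (i, f i)) = dehomogenize p (∏ i, X (i, g i)))
    {i : ι} (hi : ¬ p (i, f i)) : f i = g i := by
  obtain ⟨j, hj⟩ := exists_eq_of_dehomogenize_prod_X_eq h hi
  obtain ⟨rfl, hgf⟩ := Prod.mk.inj hj
  exact hgf.symm

theorem prod_eq_prod_X_of_ne_zero {M : Matrix ι κ (MvPolynomial (ι × κ) R)}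
    (hM : ∀ i j, M i j = 0 ∨ M i j = X (i, j)) {f : ι → κ} (hf : ∏ i, M i (f i) ≠ 0) :
    ∏ i, M i (f i) = ∏ i, X (i, f i) :=
  Finset.prod_congr rfl fun i hi =>
    (hM i (f i)).resolve_left fun h => hf (Finset.prod_eq_zero hi h)

end MvPolynomial

namespace Equiv

variable {ι κ : Type*}

def matchingGraph (σ : ι ≃ κ) : SimpleGraph (ι ⊕ κ) where
  Adj
    | inl i, inr j => σ i = j
    | inr j, inl i => σ i = j
    | _, _ => False
  symm := ⟨by rintro (_ | _) (_ | _) h <;> exact h⟩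
  loopless := ⟨by rintro (_ | _) h <;> exact h⟩

@[simp]
theorem matchingGraph_adj_inl_inr (σ : ι ≃ κ) (i : ι) (j : κ) :
    σ.matchingGraph.Adj (inl i) (inr j) ↔ σ i = j := .rfl

theorem existsUnique_matchingGraph_adj (σ : ι ≃ κ) (v : ι ⊕ κ) :
    ∃! w, σ.matchingGraph.Adj v w := by
  rcases v with i | j
  · refine ⟨inr (σ i), rfl, ?_⟩
    rintro (_ | j) h
    · exact h.elim
    · exact congrArg inr (show σ i = j from h).symm
  · refine ⟨inl (σ.symm j), σ.apply_symm_apply j, ?_⟩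
    rintro (i | _) h
    · exact congrArg inl (σ.eq_symm_apply.2 h)
    · exact h.elim

theorem matchingGraph_injective : Function.Injective (matchingGraph : (ι ≃ κ) → _) := by
  intro σ τ h
  ext i
  exact ((matchingGraph_adj_inl_inr τ i (σ i)).1 (h ▸ rfl)).symm

theorem matchingGraph_symmDiff_le {F : SimpleGraph (ι ⊕ κ)} {σ τ : ι ≃ κ}
    (hσ : ∀ i, σ i ≠ τ i → F.Adj (inl i) (inr (σ i)))
    (hτ : ∀ i, σ i ≠ τ i → F.Adj (inl i) (inr (τ i))) :
    σ.matchingGraph ∆ τ.matchingGraph ≤ F := by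
  have key : ∀ i j, (σ.matchingGraph ∆ τ.matchingGraph).Adj (inl i) (inr j) →
      F.Adj (inl i) (inr j) := by
    rintro i j (⟨rfl, h⟩ | ⟨rfl, h⟩)
    · exact hσ i (Ne.symm h)
    · exact hτ i h
  rintro (i | j) (i' | j') h
  · rcases h with ⟨⟨⟩, -⟩ | ⟨⟨⟩, -⟩
  · exact key i j' h
  · exact (key i' j h.symm).symm
  · rcases h with ⟨⟨⟩, -⟩ | ⟨⟨⟩, -⟩

end Equiv

namespace SimpleGraph

variable {V : Type*} [Finite V] {F G G' : SimpleGraph V}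

theorem IsAcyclic.eq_of_symmDiff_le (hF : F.IsAcyclic) (hG : ∀ v, ∃! w, G.Adj v w)
    (hG' : ∀ v, ∃! w, G'.Adj v w) (h : G ∆ G' ≤ F) : G = G' := by
  have hcyc : (G ∆ G').IsCycles := by
    simpa using Subgraph.IsPerfectMatching.symmDiff_isCycles
      ((Subgraph.isPerfectMatching_iff (M := (⊤ : G.Subgraph))).2 (by simpa using hG))
      ((Subgraph.isPerfectMatching_iff (M := (⊤ : G'.Subgraph))).2 (by simpa using hG'))
  by_contra hne
  obtain ⟨v, w, hvw⟩ := ne_bot_iff_exists_adj.1 (symmDiff_eq_bot.not.2 hne)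
  exact isBridge_iff.1 (isAcyclic_iff_forall_adj_isBridge.1 (hF.anti h) hvw)
    (hcyc.reachable_deleteEdges hvw)

theorem IsAcyclic.equiv_eq_of_adj {ι κ : Type*} [Finite ι] {F : SimpleGraph (ι ⊕ κ)}
    (hF : F.IsAcyclic) {σ τ : ι ≃ κ} (hσ : ∀ i, σ i ≠ τ i → F.Adj (inl i) (inr (σ i)))
    (hτ : ∀ i, σ i ≠ τ i → F.Adj (inl i) (inr (τ i))) : σ = τ := by
  have : Finite κ := Finite.of_equiv ι σ
  exact Equiv.matchingGraph_injective <| hF.eq_of_symmDiff_le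
    σ.existsUnique_matchingGraph_adj τ.existsUnique_matchingGraph_adj
    (Equiv.matchingGraph_symmDiff_le hσ hτ)

end SimpleGraph

theorem leibniz_monomials_equal_of_dehomogenization_equal_general (k : ℕ)
    (M : Matrix (Fin k) (Fin k) (MvPolynomial (Fin k × Fin k) ℝ))
    (hM : ∀ i j, M i j = 0 ∨ M i j = X (i, j))
    (F : SimpleGraph (Fin k ⊕ Fin k)) (hacyclic : F.IsAcyclic)
    (deh : MvPolynomial (Fin k × Fin k) ℝ →ₐ[ℝ] MvPolynomial (Fin k × Fin k) ℝ)
    (hdeh : deh = aeval fun e : Fin k × Fin k =>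
      if F.Adj (inl e.1) (inr e.2) then 1 else X e)
    (σ τ : Equiv.Perm (Fin k))
    (hσ : ∏ i, M i (σ i) ≠ 0) (hτ : ∏ i, M i (τ i) ≠ 0)
    (heq : deh (∏ i, M i (σ i)) = deh (∏ i, M i (τ i))) :
    (∏ i, M i (σ i)) = ∏ i, M i (τ i) := by
  rw [prod_eq_prod_X_of_ne_zero hM hσ, prod_eq_prod_X_of_ne_zero hM hτ] at heq ⊢
  replace heq : dehomogenize (fun e : Fin k × Fin k => F.Adj (inl e.1) (inr e.2))
      (∏ i, X (i, σ i)) = dehomogenize _ (∏ i, X (i, τ i)) := hdeh ▸ heq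
  have hστ : σ = τ := hacyclic.equiv_eq_of_adj
    (fun i hne => by_contra fun hi => hne (apply_eq_of_dehomogenize_prod_X_eq heq hi))
    (fun i hne => by_contra fun hi => hne (apply_eq_of_dehomogenize_prod_X_eq heq.symm hi).symm)
  rw [hστ]

/-- Let S(x) be a symbolic slack matrix (entries 0 or distinct variables X (i,j)) and F a
forest in the bipartite non-incidence graph (nodes = rows and columns, an edge for each
variable entry).  If two monomials appearing in the Leibniz expansion of a k×k minor of
S(x) become equal after setting the variables of F to 1, then they were already equal. -/
theorem leibniz_monomials_equal_of_dehomogenization_equal (k : ℕ)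
    (M : Matrix (Fin k) (Fin k) (MvPolynomial (Fin k × Fin k) ℝ))
    (hM : ∀ i j, M i j = 0 ∨ M i j = X (i, j))
    (F : SimpleGraph (Fin k ⊕ Fin k)) (hacyclic : F.IsAcyclic)
    (hFedges : ∀ u w, F.Adj u w →
      (∃ i j, u = inl i ∧ w = inr j ∧ M i j = X (i, j)) ∨
      (∃ i j, u = inr j ∧ w = inl i ∧ M i j = X (i, j)))
    (deh : MvPolynomial (Fin k × Fin k) ℝ →ₐ[ℝ] MvPolynomial (Fin k × Fin k) ℝ)
    (hdeh : deh = aeval fun e : Fin k × Fin k =>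
      if F.Adj (inl e.1) (inr e.2) then 1 else X e)
    (σ τ : Equiv.Perm (Fin k))
    (hσ : ∏ i, M i (σ i) ≠ 0) (hτ : ∏ i, M i (τ i) ≠ 0)
    (heq : deh (∏ i, M i (σ i)) = deh (∏ i, M i (τ i))) :
    (∏ i, M i (σ i)) = ∏ i, M i (τ i) :=
  leibniz_monomials_equal_of_dehomogenization_equal_general k M hM F hacyclic deh hdeh σ τ hσ hτ heq
end
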